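/- arXiv:2409.09973 — 2 statements merged into one kernel-verified Lean document; each statement's English description precedes it below -/
import Mathlib

section
/- Let Q be a probability law for a pair of random variables (X, Y) where Y takes values in {0,1}, and let V be a {0,1}-valued random variable with joint law determined by Q. Suppose E_Q[V | Y=1, X] − E_Q[V | Y=0, X] ≠ 0 almost surely. Define m_Q(x,v) = (v − E_Q[V | Y=0, X=x]) / (E_Q[V | Y=1, X=x] − E_Q[V | Y=0, X=x]). Then E_Q[m_Q(X, V) | X, Y] = Y almost surely. -/
open MeasureTheory

/-! Write `h = E_Q[V | X, Y] = e₁(X) Y + e₀(X) (1 - Y)`. Where `e₁(X) ≠ e₀(X)`,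
`m_Q(X, V) = (V - h) / (e₁(X) - e₀(X)) + Y`. The first summand is a `σ(X, Y)`-measurable
factor times `V - E_Q[V | X, Y]`, so its conditional expectation vanishes, while `Y` is
`σ(X, Y)`-measurable. -/

section

variable {Ω : Type*} {m m₀ : MeasurableSpace Ω} {μ : Measure Ω}

lemma integrable_of_forall_eq_zero_or_eq_one [IsFiniteMeasure μ] {f : Ω → ℝ}
    (hf : AEStronglyMeasurable f μ) (h01 : ∀ ω, f ω = 0 ∨ f ω = 1) : Integrable f μ :=
  Integrable.of_bound hf 1 <| ae_of_all _ fun ω => by rcases h01 ω with h | h <;> simp [h]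

lemma condExp_mul_sub_condExp_ae_eq_zero (hm : m ≤ m₀) [SigmaFinite (μ.trim hm)]
    {f g : Ω → ℝ} (hg : StronglyMeasurable[m] g) (hf : Integrable f μ)
    (hgf : Integrable (g * (f - μ[f | m])) μ) :
    μ[g * (f - μ[f | m]) | m] =ᵐ[μ] 0 := by
  have h_centered : μ[f - μ[f | m] | m] =ᵐ[μ] 0 := by
    filter_upwards [condExp_sub hf (integrable_condExp (m := m) (f := f)) m,
      condExp_condExp_of_le (f := f) le_rfl hm] with ω h_sub h_idem
    simp [h_sub, h_idem]
  filter_upwards [condExp_mul_of_stronglyMeasurable_left hg hgf (hf.sub integrable_condExp),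
    h_centered] with ω h_pull h_zero
  simp [h_pull, h_zero]

end

-- `e₀ x`, `e₁ x` are versions of `E_Q[V | X = x, Y = 0]` and `E_Q[V | X = x, Y = 1]`,
-- pinned down through `hcond`.
/-- With `V, Y` binary, `e y (x)` versions of `E_Q[V | X = x, Y = y]`
(encoded by `E_Q[V | X, Y] = e1(X)·Y + e0(X)·(1−Y)` a.s.) and
`E_Q[V|Y=1,X] − E_Q[V|Y=0,X] ≠ 0` a.s., the function
`m_Q(x,v) = (v − e0(x))/(e1(x) − e0(x))` satisfies `E_Q[m_Q(X,V) | X, Y] = Y` a.s. -/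
theorem stmt_4 {Ω α : Type*} {F : MeasurableSpace Ω} [MeasurableSpace α]
    (Q : Measure Ω) [IsProbabilityMeasure Q]
    (X : Ω → α) (V Y : Ω → ℝ) (hX : Measurable X) (hV : Measurable V) (hY : Measurable Y)
    (hVbin : ∀ ω, V ω = 0 ∨ V ω = 1) (hYbin : ∀ ω, Y ω = 0 ∨ Y ω = 1)
    (e0 e1 : α → ℝ) (he0 : Measurable e0) (he1 : Measurable e1)
    (hcond : Q[V|MeasurableSpace.comap (fun ω => (X ω, Y ω)) inferInstance] =ᵐ[Q]
      fun ω => e1 (X ω) * Y ω + e0 (X ω) * (1 - Y ω))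
    (hne : ∀ᵐ ω ∂Q, e1 (X ω) - e0 (X ω) ≠ 0)
    (hint : Integrable (fun ω => (V ω - e0 (X ω)) / (e1 (X ω) - e0 (X ω))) Q) :
    Q[fun ω => (V ω - e0 (X ω)) / (e1 (X ω) - e0 (X ω))|
        MeasurableSpace.comap (fun ω => (X ω, Y ω)) inferInstance] =ᵐ[Q] Y := by
  set m := MeasurableSpace.comap (fun ω => (X ω, Y ω)) inferInstance
  have hm : m ≤ F := (hX.prodMk hY).comap_le
  set g : Ω → ℝ := fun ω => (e1 (X ω) - e0 (X ω))⁻¹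
  have hg : StronglyMeasurable[m] g :=
    (((he1.comp measurable_fst).sub (he0.comp measurable_fst)).inv.comp
      (comap_measurable _)).stronglyMeasurable
  have hY_int : Integrable Y Q :=
    integrable_of_forall_eq_zero_or_eq_one hY.aestronglyMeasurable hYbin
  have hY_cond : Q[Y | m] = Y :=
    condExp_of_stronglyMeasurable hm (measurable_snd.comp (comap_measurable _)).stronglyMeasurable
      hY_int
  have h_decomp : (fun ω => (V ω - e0 (X ω)) / (e1 (X ω) - e0 (X ω))) =ᵐ[Q]
      g * (V - Q[V | m]) + Y := by
    filter_upwards [hne, hcond] with ω hω h_cond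
    simp only [Pi.add_apply, Pi.mul_apply, Pi.sub_apply, h_cond, g]
    field_simp
    ring
  have h_int : Integrable (g * (V - Q[V | m])) Q :=
    (hint.sub hY_int).congr <| h_decomp.mono fun ω hω => by simp [hω]
  calc Q[fun ω => (V ω - e0 (X ω)) / (e1 (X ω) - e0 (X ω)) | m]
      =ᵐ[Q] Q[g * (V - Q[V | m]) + Y | m] := condExp_congr_ae h_decomp
    _ =ᵐ[Q] Q[g * (V - Q[V | m]) | m] + Q[Y | m] := condExp_add h_int hY_int m
    _ =ᵐ[Q] Y := by
        filter_upwards [condExp_mul_sub_condExp_ae_eq_zero hm hg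
          (integrable_of_forall_eq_zero_or_eq_one hV.aestronglyMeasurable hVbin) h_int]
          with ω hω
        simp [hω, hY_cond]
end

section
/- Let U and B be random variables on finite sets 𝒰 and ℬ with joint probability mass function q(u,b) under law Q. Suppose there exists u₀ ∈ 𝒰 with q(u₀ | b) > 0 for all b with q(b) > 0. Then for all u ∈ 𝒰 and all b with q(b) > 0, q(u, b) = q(u | b) · [q(b | u₀)/q(u₀ | b)] / Σ_{b': q(b')>0} [q(b' | u₀)/q(u₀ | b')]. In other words, the joint law is determined by the conditional of U given B and the conditional of B given U=u₀. -/
/-! Each summand `q(b'|u₀)/q(u₀|b')` of the normalizer equals `q(b')/q(u₀)`, so the normalizer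
is `1/q(u₀)`, while `q(u|b) · q(b|u₀)/q(u₀|b) = q(u,b)/q(u₀)`. -/

open Finset

theorem sum_filter_pos_div_div_div {B : Type*} (s : Finset B) (f g : B → ℝ) (c : ℝ)
    (hf : ∀ b, 0 ≤ f b) (hg : ∀ b, 0 < f b → g b ≠ 0) :
    ∑ b ∈ s.filter (fun b => 0 < f b), (g b / c) / (g b / f b) = (∑ b ∈ s, f b) / c := by
  have hfilter : ∑ b ∈ s.filter (fun b => 0 < f b), f b = ∑ b ∈ s, f b :=
    sum_filter_of_ne fun b _ hb => (hf b).lt_of_ne' hb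
  rw [← hfilter, sum_div]
  exact sum_congr rfl fun b hb => div_div_div_cancel_left' _ _ (hg b (mem_filter.mp hb).2)

/-- For a joint pmf `q` on finite `U × B` with `q(u₀|b) > 0` whenever `q(b) > 0`,
the joint is recovered from the conditional of `U` given `B` and of `B` given `U = u₀`:
`q(u,b) = q(u|b) · [q(b|u₀)/q(u₀|b)] / Σ_{b' : q(b')>0} [q(b'|u₀)/q(u₀|b')]`. -/
theorem stmt_6 {U B : Type*} [Fintype U] [Fintype B]
    (q : U → B → ℝ) (hnn : ∀ u b, 0 ≤ q u b) (hsum : ∑ u, ∑ b, q u b = 1)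
    (u0 : U) (hpos : ∀ b, 0 < ∑ u, q u b → 0 < q u0 b / ∑ u, q u b) :
    ∀ u b, 0 < ∑ u', q u' b →
      q u b = (q u b / ∑ u', q u' b) *
        ((q u0 b / ∑ b', q u0 b') / (q u0 b / ∑ u', q u' b)) /
        ∑ b' ∈ Finset.univ.filter (fun b' => 0 < ∑ u', q u' b'),
          (q u0 b' / ∑ b'', q u0 b'') / (q u0 b' / ∑ u', q u' b') := by
  intro u b hb
  have hq0 : ∀ b', 0 < ∑ u', q u' b' → 0 < q u0 b' := fun b' hb' =>
    (div_pos_iff_of_pos_right hb').mp (hpos b' hb')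
  have hS : 0 < ∑ b', q u0 b' :=
    (hq0 b hb).trans_le (single_le_sum (fun b' _ => hnn u0 b') (mem_univ b))
  have hmarginal : ∑ b', ∑ u', q u' b' = 1 := by rw [sum_comm]; exact hsum
  rw [sum_filter_pos_div_div_div _ _ _ _ (fun b' => sum_nonneg fun u' _ => hnn u' b')
      (fun b' hb' => (hq0 b' hb').ne'), hmarginal, div_div_div_cancel_left' _ _ (hq0 b hb).ne']
  field_simp
end
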